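/- arXiv:2403.13726 — 8 statements merged into one kernel-verified Lean document; each statement's English description precedes it below -/
import Mathlib

section
/- For every even t ≥ 4 and every n ≥ 1, the coloring g_n : C_t^n → [0, (t/2)^n - 1] defined by g_n(x_1...x_n) = Σ_{j=1}^{n} (t/2)^{j-1}·⌊x_j/2⌋ assigns the same color to the first two points of every geometric line; in particular, g_n has no rainbow geometric line. -/
/-- A geometric line in the `n`-cube over `t` elements: a sequence of `t`
distinct points such that in each coordinate `j`, either all points agree,
or the `j`-th coordinate of the `i`-th point is `i`, or is `t-1-i`. -/
def IsGeomLine (t n : ℕ) (ℓ : Fin t → Fin n → Fin t) : Prop :=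
  Function.Injective ℓ ∧
    ∀ j : Fin n,
      (∀ i i' : Fin t, ℓ i j = ℓ i' j) ∨
      (∀ i : Fin t, (ℓ i j : ℕ) = (i : ℕ)) ∨
      (∀ i : Fin t, (ℓ i j : ℕ) = t - 1 - (i : ℕ))
/-- The coloring `g_n : C_t^n → [0, (t/2)^n - 1]` given by
`g_n(x) = ∑_j (t/2)^(j-1) * ⌊x_j / 2⌋` (base-`t/2` representation of the
tuple `(⌊x_1/2⌋, …, ⌊x_n/2⌋)`); it agrees with the recursive definition
`g_1(x) = ⌊x/2⌋`, `g_n(x_1…x_n) = g_{n-1}(x_1…x_{n-1}) + (t/2)^{n-1}⌊x_n/2⌋`. -/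
def gcol (t n : ℕ) (x : Fin n → Fin t) : ℕ :=
  ∑ j : Fin n, (t / 2) ^ (j : ℕ) * ((x j : ℕ) / 2)

/-- For every even `t ≥ 4` and `n ≥ 1`, the coloring `g_n` gives the same
color to the first two points of every geometric line of `C_t^n`; in
particular no geometric line is rainbow for `g_n`. -/
theorem stmt2 (t n : ℕ) (ht : Even t) (ht4 : 4 ≤ t) (hn : 1 ≤ n)
    (ℓ : Fin t → Fin n → Fin t) (hℓ : IsGeomLine t n ℓ) :
    gcol t n (ℓ ⟨0, by omega⟩) = gcol t n (ℓ ⟨1, by omega⟩) ∧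
      ¬ Function.Injective (fun i : Fin t => gcol t n (ℓ i)) := by
  obtain ⟨k, hk⟩ := ht
  have key : gcol t n (ℓ ⟨0, by omega⟩) = gcol t n (ℓ ⟨1, by omega⟩) := by
    unfold gcol
    refine Finset.sum_congr rfl fun j _ => ?_
    rcases hℓ.2 j with h | h | h
    · rw [h ⟨0, by omega⟩ ⟨1, by omega⟩]
    · rw [h ⟨0, by omega⟩, h ⟨1, by omega⟩]; norm_num
    · rw [h ⟨0, by omega⟩, h ⟨1, by omega⟩]
      congr 1
      simp only [Fin.val_mk]
      omega
  refine ⟨key, fun hinj => ?_⟩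
  have := hinj (a₁ := ⟨0, by omega⟩) (a₂ := ⟨1, by omega⟩) key
  simp [Fin.ext_iff] at this
end

section
/- For every even t ≥ 4 and every n ≥ 1, there exists a balanced (t/2)^n-coloring of C_t^n with no rainbow geometric line. -/
/-- For every even `t ≥ 4` and every `n ≥ 1`, there is a balanced
`(t/2)^n`-coloring of `C_t^n` (all color classes of equal size, all colors
used) with no rainbow geometric line. -/
theorem stmt3 (t n : ℕ) (ht : Even t) (ht4 : 4 ≤ t) (hn : 1 ≤ n) :
    ∃ f : (Fin n → Fin t) → Fin ((t / 2) ^ n),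
      Function.Surjective f ∧
      (∀ c c' : Fin ((t / 2) ^ n),
        (Finset.univ.filter (fun x => f x = c)).card =
          (Finset.univ.filter (fun x => f x = c')).card) ∧
      (∀ ℓ : Fin t → Fin n → Fin t, IsGeomLine t n ℓ →
        ¬ Function.Injective (f ∘ ℓ)) := by
  obtain ⟨m, hm⟩ := ht
  have htm : t = 2 * m := by omega
  have ht2 : t / 2 = m := by omega
  set g : (Fin n → Fin t) → (Fin n → Fin (t / 2)) :=
    fun x j => ⟨(x j : ℕ) / 2, by have := (x j).isLt; omega⟩ with hg
  refine ⟨fun x => finFunctionFinEquiv (g x), ?_, ?_, ?_⟩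
  · -- surjective
    intro c
    obtain ⟨y, hy⟩ := finFunctionFinEquiv.surjective c
    refine ⟨fun j => ⟨2 * (y j : ℕ), by have := (y j).isLt; omega⟩, ?_⟩
    rw [← hy]
    refine congrArg finFunctionFinEquiv (funext fun j => Fin.ext ?_)
    simp [hg]
  · -- balanced
    have key : ∀ y : Fin n → Fin (t / 2),
        (Finset.univ.filter (fun x => g x = y)).card = 2 ^ n := by
      intro y
      have hset : (Finset.univ.filter (fun x => g x = y)) =
          Fintype.piFinset (fun j =>
            Finset.univ.filter (fun a : Fin t => (a : ℕ) / 2 = (y j : ℕ))) := by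
        ext x
        simp only [Finset.mem_filter, Finset.mem_univ, true_and,
          Fintype.mem_piFinset, funext_iff, hg, Fin.ext_iff]
      rw [hset, Fintype.card_piFinset]
      have hcard : ∀ j : Fin n,
          (Finset.univ.filter (fun a : Fin t => (a : ℕ) / 2 = (y j : ℕ))).card = 2 := by
        intro j
        have hyj := (y j).isLt
        have hpair : (Finset.univ.filter (fun a : Fin t => (a : ℕ) / 2 = (y j : ℕ))) =
            {⟨2 * (y j : ℕ), by omega⟩, ⟨2 * (y j : ℕ) + 1, by omega⟩} := by
          ext a
          simp only [Finset.mem_filter, Finset.mem_univ, true_and,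
            Finset.mem_insert, Finset.mem_singleton, Fin.ext_iff]
          omega
        rw [hpair, Finset.card_insert_of_notMem, Finset.card_singleton]
        simp only [Finset.mem_singleton, Fin.ext_iff]
        omega
      simp [hcard]
    intro c c'
    have h : ∀ c : Fin ((t / 2) ^ n),
        (Finset.univ.filter (fun x => finFunctionFinEquiv (g x) = c)).card = 2 ^ n := by
      intro c
      have : (Finset.univ.filter (fun x => finFunctionFinEquiv (g x) = c)) =
          (Finset.univ.filter (fun x => g x = finFunctionFinEquiv.symm c)) := by
        ext x
        simp [Equiv.eq_symm_apply]
      rw [this, key]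
    rw [h, h]
  · -- no rainbow line
    intro ℓ hℓ hinj
    set i0 : Fin t := ⟨0, by omega⟩
    set i1 : Fin t := ⟨1, by omega⟩
    have hgeq : g (ℓ i0) = g (ℓ i1) := by
      funext j
      apply Fin.ext
      rcases hℓ.2 j with h | h | h
      · simp [hg, h i0 i1]
      · have h0 := h i0
        have h1 := h i1
        have hv0 : (i0 : ℕ) = 0 := rfl
        have hv1 : (i1 : ℕ) = 1 := rfl
        simp only [hg]
        omega
      · have h0 := h i0
        have h1 := h i1
        have hv0 : (i0 : ℕ) = 0 := rfl
        have hv1 : (i1 : ℕ) = 1 := rfl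
        simp only [hg]
        omega
    have : (i0 : Fin t) = i1 := hinj (by simp [Function.comp, hgeq])
    simp only [Fin.ext_iff, i0, i1] at this
    omega
end

section
/- For every even t ≥ 4 and every n ≥ 1, there exists a balanced (t/2)^n-coloring of C_t^n with no rainbow combinatorial line. -/
/-- A combinatorial line in the `n`-cube over `t` elements: a sequence of `t`
distinct points such that in each coordinate `j`, either all points agree or
the `j`-th coordinate of the `i`-th point is `i`, the latter holding in at
least one coordinate. -/
def IsCombLine (t n : ℕ) (ℓ : Fin t → Fin n → Fin t) : Prop :=
  Function.Injective ℓ ∧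
    (∀ j : Fin n,
      (∀ i i' : Fin t, ℓ i j = ℓ i' j) ∨
      (∀ i : Fin t, (ℓ i j : ℕ) = (i : ℕ))) ∧
    (∃ j : Fin n, ∀ i : Fin t, (ℓ i j : ℕ) = (i : ℕ))

/-- For every even `t ≥ 4` and every `n ≥ 1`, there is a balanced
`(t/2)^n`-coloring of `C_t^n` with no rainbow combinatorial line. -/
theorem stmt4 (t n : ℕ) (ht : Even t) (ht4 : 4 ≤ t) (hn : 1 ≤ n) :
    ∃ f : (Fin n → Fin t) → Fin ((t / 2) ^ n),
      Function.Surjective f ∧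
      (∀ c c' : Fin ((t / 2) ^ n),
        (Finset.univ.filter (fun x => f x = c)).card =
          (Finset.univ.filter (fun x => f x = c')).card) ∧
      (∀ ℓ : Fin t → Fin n → Fin t, IsCombLine t n ℓ →
        ¬ Function.Injective (f ∘ ℓ)) := by
  have h2 : t % 2 = 0 := Nat.even_iff.mp ht
  set m := t / 2 with hm
  have htm : t = 2 * m := by omega
  have hmpos : 0 < m := by omega
  have hmt : m < t := by omega
  let g : (Fin n → Fin t) → (Fin n → Fin m) :=
    fun x j => ⟨(x j : ℕ) % m, Nat.mod_lt _ hmpos⟩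
  have hcard : Fintype.card (Fin n → Fin m) = m ^ n := by simp
  let e : (Fin n → Fin m) ≃ Fin (m ^ n) := Fintype.equivFinOfCardEq hcard
  have key : ∀ y : Fin n → Fin m,
      (Finset.univ.filter (fun x => g x = y)).card = 2 ^ n := by
    intro y
    have hset : Finset.univ.filter (fun x => g x = y) =
        Fintype.piFinset (fun j =>
          Finset.univ.filter (fun v : Fin t => (v : ℕ) % m = (y j : ℕ))) := by
      ext x
      simp [Fintype.mem_piFinset, funext_iff, Fin.ext_iff, g]
    rw [hset, Fintype.card_piFinset]
    have hfac : ∀ j : Fin n,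
        (Finset.univ.filter (fun v : Fin t => (v : ℕ) % m = (y j : ℕ))).card = 2 := by
      intro j
      have hy : (y j : ℕ) < m := (y j).isLt
      have hpair : Finset.univ.filter (fun v : Fin t => (v : ℕ) % m = (y j : ℕ)) =
          {⟨(y j : ℕ), by omega⟩, ⟨(y j : ℕ) + m, by omega⟩} := by
        ext v
        simp only [Finset.mem_filter, Finset.mem_univ, true_and,
          Finset.mem_insert, Finset.mem_singleton, Fin.ext_iff]
        constructor
        · intro h
          have hv : (v : ℕ) < 2 * m := by omega
          have hdm := Nat.div_add_mod (v : ℕ) m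
          have hq : (v : ℕ) / m < 2 :=
            (Nat.div_lt_iff_lt_mul hmpos).mpr (by omega)
          have hq' : (v : ℕ) / m = 0 ∨ (v : ℕ) / m = 1 :=
            Nat.le_one_iff_eq_zero_or_eq_one.mp (Nat.lt_succ_iff.mp hq)
          rcases hq' with h' | h'
          · have hz : m * ((v : ℕ) / m) = 0 := by rw [h']; ring
            omega
          · have hz : m * ((v : ℕ) / m) = m := by rw [h']; ring
            omega
        · rintro (h | h) <;> rw [h] <;>
            simp [Nat.add_mod_right, Nat.mod_eq_of_lt hy]
      rw [hpair]
      rw [Finset.card_insert_of_notMem (by simp [Fin.ext_iff]; omega)]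
      simp
    simp [hfac]
  refine ⟨fun x => e (g x), ?_, ?_, ?_⟩
  · intro c
    refine ⟨fun j => ⟨((e.symm c) j : ℕ), lt_trans ((e.symm c) j).isLt hmt⟩, ?_⟩
    have : g (fun j => ⟨((e.symm c) j : ℕ), lt_trans ((e.symm c) j).isLt hmt⟩) = e.symm c := by
      funext j
      exact Fin.ext (Nat.mod_eq_of_lt ((e.symm c) j).isLt)
    show e (g _) = c
    rw [this]
    simp
  · intro c c'
    have hre : ∀ c : Fin (m ^ n), (Finset.univ.filter (fun x => e (g x) = c)).card = 2 ^ n := by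
      intro c
      have : (Finset.univ.filter (fun x => e (g x) = c)) =
          (Finset.univ.filter (fun x => g x = e.symm c)) := by
        ext x
        simp [Equiv.eq_symm_apply]
      rw [this, key]
    rw [hre, hre]
  · rintro ℓ ⟨hℓinj, hcols, j0, hj0⟩ hinj
    have heq : g (ℓ ⟨0, by omega⟩) = g (ℓ ⟨m, hmt⟩) := by
      funext j
      apply Fin.ext
      rcases hcols j with hc | ha
      · simp only [g, hc ⟨0, by omega⟩ ⟨m, hmt⟩]
      · have h0 : (ℓ ⟨0, by omega⟩ j : ℕ) = 0 := ha _
        have h1 : (ℓ ⟨m, hmt⟩ j : ℕ) = m := ha _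
        simp [g, h0, h1]
    have := hinj (a₁ := ⟨0, by omega⟩) (a₂ := ⟨m, hmt⟩) (by simp [Function.comp, heq])
    simp [Fin.ext_iff] at this
    omega
end

section
/- The 3-coloring of C_3^3 given by color classes C_0 = {000,002,020,200,220,022,202,222,001}, C_1 = {011,021,101,201,111,221,010,210,012}, C_2 = {100,110,120,121,211,102,112,122,212} is balanced and contains no rainbow geometric line. -/
/-- The first color class (words as triples `(x₁,x₂,x₃)`). -/
def S0 : Finset (ℕ × ℕ × ℕ) :=
  {(0,0,0),(0,0,2),(0,2,0),(2,0,0),(2,2,0),(0,2,2),(2,0,2),(2,2,2),(0,0,1)}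

/-- The second color class. -/
def S1 : Finset (ℕ × ℕ × ℕ) :=
  {(0,1,1),(0,2,1),(1,0,1),(2,0,1),(1,1,1),(2,2,1),(0,1,0),(2,1,0),(0,1,2)}

/-- The 3-coloring of `C_3^3` with color classes `C_0 = S0`, `C_1 = S1` and
`C_2` everything else (which is exactly
`{100,110,120,121,211,102,112,122,212}`). -/
def f7 (x : Fin 3 → Fin 3) : Fin 3 :=
  if ((x 0 : ℕ), (x 1 : ℕ), (x 2 : ℕ)) ∈ S0 then 0
  else if ((x 0 : ℕ), (x 1 : ℕ), (x 2 : ℕ)) ∈ S1 then 1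
  else 2

/-- Parametrized family covering all geometric lines: `a` gives the values on
constant coordinates, `d j` selects constant/increasing/decreasing. -/
def L (a d : Fin 3 → Fin 3) : Fin 3 → Fin 3 → Fin 3 := fun i j =>
  if d j = 0 then a j else if d j = 1 then i else i.rev

lemma no_rainbow_L : ∀ a d : Fin 3 → Fin 3, ¬ Function.Injective (f7 ∘ L a d) := by
  decide

lemma line_eq_L (ℓ : Fin 3 → Fin 3 → Fin 3) (h : IsGeomLine 3 3 ℓ) :
    ∃ a d, ℓ = L a d := by
  obtain ⟨-, hc⟩ := h
  refine ⟨ℓ 0, fun j => if ∀ i : Fin 3, (ℓ i j : ℕ) = (i : ℕ) then 1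
    else if ∀ i : Fin 3, (ℓ i j : ℕ) = 3 - 1 - (i : ℕ) then 2 else 0, ?_⟩
  funext i j
  show ℓ i j = L _ _ i j
  unfold L
  beta_reduce
  by_cases h1 : ∀ i : Fin 3, (ℓ i j : ℕ) = (i : ℕ)
  · rw [if_pos h1, if_neg (by decide : (1 : Fin 3) ≠ 0), if_pos rfl]
    exact Fin.ext (h1 i)
  by_cases h2 : ∀ i : Fin 3, (ℓ i j : ℕ) = 3 - 1 - (i : ℕ)
  · rw [if_neg h1, if_pos h2, if_neg (by decide : (2 : Fin 3) ≠ 0),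
      if_neg (by decide : (2 : Fin 3) ≠ 1)]
    refine Fin.ext ?_
    have := h2 i
    rw [Fin.val_rev]
    omega
  · rw [if_neg h1, if_neg h2, if_pos rfl]
    rcases hc j with h | h | h
    · exact h i 0
    · exact absurd h h1
    · exact absurd h h2

set_option maxRecDepth 10000

/-- This 3-coloring of `C_3^3` is balanced (each color class has 9 elements)
and contains no rainbow geometric line. -/
theorem stmt7 :
    (∀ c : Fin 3, (Finset.univ.filter (fun x : Fin 3 → Fin 3 => f7 x = c)).card = 9) ∧
    (∀ ℓ : Fin 3 → Fin 3 → Fin 3, IsGeomLine 3 3 ℓ →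
      ¬ Function.Injective (f7 ∘ ℓ)) := by
  refine ⟨by decide, fun ℓ hℓ => ?_⟩
  obtain ⟨a, d, rfl⟩ := line_eq_L ℓ hℓ
  exact no_rainbow_L a d
end

section
/- For every t ≥ 4, there exists a balanced t-coloring of C_t^2 with no rainbow geometric line; equivalently, a t×t array over t symbols, each symbol used exactly t times, such that every row, every column, and each of the two main diagonals contains fewer than t distinct symbols. -/
/-!
Over `R = ℤ/t`, colour the cell `(i, j)` by `i + 𝟙_{1,2} (j - 2 i)`. Since `(i, j) ↦ (i, j - 2 i)`
is a bijection and `i` is determined by the colour and `j - 2 i`, every colour is used exactly `t`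
times. Each line has two cells of the same colour: `j = 2 i` and `j = 2 i + 3` in row `i`; in
column `j`, the rows `i` and `i + 1` where `j - 1 ∈ {2 i, 2 i + 1}`; the cells `(-1, -1)`, `(0, 0)`
of the diagonal and `(-1, 0)`, `(0, -1)` of the antidiagonal. This only needs `2, 3 ≠ 0` in `R`,
i.e. `t ≥ 4`.
-/

open Finset Function

lemma Finset.card_image_univ_lt_of_not_injective {α β : Type*} [Fintype α] [DecidableEq β]
    {v : α → β} (hv : ¬Injective v) : #(univ.image v) < Fintype.card α := by
  rw [← card_univ]
  refine card_image_le.lt_of_ne fun h => hv ?_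
  simpa using card_image_iff.1 h

lemma card_filter_add_comp_sub_mul_eq {R : Type*} [Ring R] [Fintype R] [DecidableEq R]
    (g : R → R) (a c : R) :
    #{p : R × R | p.1 + g (p.2 - a * p.1) = c} = Fintype.card R := by
  rw [← card_univ]
  refine card_nbij' (fun p => p.2 - a * p.1) (fun k => (c - g k, k + a * (c - g k)))
    (fun _ _ => mem_coe.2 (mem_univ _)) (fun k _ => ?_) (fun p hp => ?_) (fun k _ => ?_)
  · simp
  · simp only [coe_filter, mem_univ, true_and, Set.mem_ofPred_eq] at hp
    ext <;> simp [← hp]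
  · simp

namespace SkewColoring

variable {R : Type*} [CommRing R]

noncomputable def bump (k : R) : R :=
  Set.indicator {1, 2} 1 k

noncomputable def color (i j : R) : R :=
  i + bump (j - 2 * i)

lemma bump_one : bump (1 : R) = 1 := by simp [bump]

lemma bump_two : bump (2 : R) = 1 := by simp [bump]

lemma bump_of_ne {k : R} (h1 : k ≠ 1) (h2 : k ≠ 2) :
    bump k = 0 :=
  Set.indicator_of_notMem (by simp [h1, h2]) _

lemma card_filter_color_eq [Fintype R] [DecidableEq R] (c : R) :
    #{p : R × R | color p.1 p.2 = c} = Fintype.card R :=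
  card_filter_add_comp_sub_mul_eq bump 2 c

variable (h2 : (2 : R) ≠ 0)
include h2

lemma one_ne_zero_of_two_ne_zero : (1 : R) ≠ 0 := fun h => h2 (by linear_combination 2 * h)

lemma bump_zero : bump (0 : R) = 0 :=
  bump_of_ne (one_ne_zero_of_two_ne_zero h2).symm h2.symm

lemma not_injective_diag : ¬Injective fun i : R => color i i := by
  intro hinj
  have hcoll : color (-1 : R) (-1) = color 0 0 := by
    simp only [color]
    rw [show (-1 : R) - 2 * -1 = 1 by ring, mul_zero, sub_zero, bump_one, bump_zero h2]
    ring
  exact neg_ne_zero.2 (one_ne_zero_of_two_ne_zero h2) (hinj hcoll)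

lemma bump_three : bump (3 : R) = 0 :=
  bump_of_ne (fun h => h2 (by linear_combination h))
    (fun h => one_ne_zero_of_two_ne_zero h2 (by linear_combination h))

variable (h3 : (3 : R) ≠ 0)
include h3

lemma bump_neg_one : bump (-1 : R) = 0 :=
  bump_of_ne (fun h => h2 (by linear_combination -h)) (fun h => h3 (by linear_combination -h))

lemma not_injective_row (i : R) : ¬Injective (color i) := by
  intro hinj
  have hcoll : color i (2 * i) = color i (2 * i + 3) := by
    simp only [color]
    rw [sub_self, add_sub_cancel_left, bump_zero h2, bump_three h2]
  exact h3 (by linear_combination -hinj hcoll)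

lemma not_injective_column (hpar : ∀ x : R, Even x ∨ Odd x) (j : R) :
    ¬Injective fun i => color i j := by
  intro hinj
  obtain ⟨i, hi⟩ : ∃ i, j - 2 * i = 1 ∨ j - 2 * i = 2 := by
    rcases hpar (j - 1) with ⟨i, hi⟩ | ⟨i, hi⟩
    · exact ⟨i, Or.inl (by linear_combination hi)⟩
    · exact ⟨i, Or.inr (by linear_combination hi)⟩
  have hcoll : color i j = color (i + 1) j := by
    simp only [color]
    rcases hi with hi | hi
    · rw [hi, show j - 2 * (i + 1) = -1 by linear_combination hi, bump_one,
        bump_neg_one h2 h3, add_zero]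
    · rw [hi, show j - 2 * (i + 1) = 0 by linear_combination hi, bump_two,
        bump_zero h2, add_zero]
  exact one_ne_zero_of_two_ne_zero h2 (by linear_combination -hinj hcoll)

lemma not_injective_antidiag : ¬Injective fun i : R => color i (-1 - i) := by
  intro hinj
  have hcoll : color (-1 : R) (-1 - -1) = color 0 (-1 - 0) := by
    simp only [color]
    rw [show (-1 : R) - -1 - 2 * -1 = 2 by ring, show (-1 : R) - 0 - 2 * 0 = -1 by ring,
      bump_two, bump_neg_one h2 h3]
    ring
  exact neg_ne_zero.2 (one_ne_zero_of_two_ne_zero h2) (hinj hcoll)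

end SkewColoring

section Fin

open Fin.CommRing

lemma Fin.even_or_odd {n : ℕ} [NeZero n] (x : Fin n) : Even x ∨ Odd x :=
  x.val.even_or_odd.imp Fin.even_of_val Fin.odd_of_val

lemma Fin.rev_eq_neg_one_sub {n : ℕ} (i : Fin (n + 1)) : i.rev = -1 - i := by
  rw [← zero_add i, Fin.rev_add, Fin.rev_zero, zero_add, ← neg_eq_iff_eq_neg.1 (Fin.neg_last n)]

lemma Fin.natCast_ne_zero {a n : ℕ} [NeZero n] (ha : 0 < a) (han : a < n) : (a : Fin n) ≠ 0 :=
  fun h => (Nat.le_of_dvd ha (Fin.natCast_eq_zero.1 h)).not_gt han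

end Fin

/-- For every `t ≥ 4` there is a balanced `t`-coloring of `C_t^2` with no
rainbow geometric line: a `t×t` array over `t` symbols, each symbol used
exactly `t` times, such that every row, every column, and each of the two main
diagonals contains fewer than `t` distinct symbols. -/
theorem stmt9 (t : ℕ) (ht : 4 ≤ t) :
    ∃ f : Fin t → Fin t → Fin t,
      (∀ c : Fin t,
        (Finset.univ.filter (fun p : Fin t × Fin t => f p.1 p.2 = c)).card = t) ∧
      (∀ i : Fin t, (Finset.univ.image (fun j => f i j)).card < t) ∧
      (∀ j : Fin t, (Finset.univ.image (fun i => f i j)).card < t) ∧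
      (Finset.univ.image (fun i => f i i)).card < t ∧
      (Finset.univ.image (fun i : Fin t => f i i.rev)).card < t := by
  obtain ⟨n, rfl⟩ : ∃ n, t = n + 1 := ⟨t - 1, by omega⟩
  open Fin.CommRing SkewColoring in
  have h2 : (2 : Fin (n + 1)) ≠ 0 := Fin.natCast_ne_zero (a := 2) two_pos (by omega)
  have h3 : (3 : Fin (n + 1)) ≠ 0 := Fin.natCast_ne_zero (a := 3) three_pos (by omega)
  have hlt {v : Fin (n + 1) → Fin (n + 1)} (hv : ¬Function.Injective v) :
      (univ.image v).card < n + 1 := by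
    simpa using card_image_univ_lt_of_not_injective hv
  refine ⟨color, fun c => by simpa using card_filter_color_eq c,
    fun i => hlt (not_injective_row h2 h3 i),
    fun j => hlt (not_injective_column h2 h3 Fin.even_or_odd j),
    hlt (not_injective_diag h2), ?_⟩
  simp_rw [Fin.rev_eq_neg_one_sub]
  exact hlt (not_injective_antidiag h2 h3)
end

section
/- For every t ≥ 3 and n ≥ 2 with (t,n) ≠ (3,2), there exists a balanced t-coloring of C_t^n with no rainbow geometric line. -/
/-!
The coloring only looks at the first `m` coordinates (`m = 2` for `t ≥ 4`, `m = 3` for `t = 3`),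
so every color class is a union of whole fibres of the projection to `C_t^m`, and balance passes
from `C_t^m` to `C_t^n`. A geometric line of `C_t^n` projects to a *weak* line of `C_t^m`: every
coordinate is still constant, increasing or decreasing, but all of them may be constant. So it
suffices to color `C_t^m` in a balanced way with no rainbow weak line. For `t ≥ 4` the square is
colored so that rows `a ≥ 3` are monochromatic and rows `0, 1, 2` share the colors `0, 1, 2`;
then each row, each column and both diagonals repeat a color. For `t = 3` an explicit coloring of
the cube `C_3^3` is checked by computation.
-/

open Finset Function

def lineCoords (t : ℕ) : Finset (Fin t → Fin t) :=
  insert id (insert Fin.rev (univ.image (const (Fin t))))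

lemma mem_lineCoords {t : ℕ} {u : Fin t → Fin t} :
    u ∈ lineCoords t ↔ u = id ∨ u = Fin.rev ∨ ∃ a, u = const (Fin t) a := by
  simp only [lineCoords, mem_insert, mem_image, mem_univ, true_and, eq_comm]

def IsWeakLine {t m : ℕ} (ℓ : Fin t → Fin m → Fin t) : Prop :=
  ∀ j, (fun i => ℓ i j) ∈ lineCoords t

lemma IsGeomLine.isWeakLine {t n : ℕ} {ℓ : Fin t → Fin n → Fin t} (hℓ : IsGeomLine t n ℓ) :
    IsWeakLine ℓ := by
  intro j
  rw [mem_lineCoords]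
  rcases hℓ.2 j with hconst | hid | hrev
  · rcases isEmpty_or_nonempty (Fin t) with _ | ⟨⟨a⟩⟩
    · exact .inl (funext isEmptyElim)
    · exact .inr (.inr ⟨ℓ a j, funext fun i => hconst i a⟩)
  · exact .inl (funext fun i => Fin.ext (hid i))
  · refine .inr (.inl (funext fun i => Fin.ext ?_))
    rw [hrev i, Fin.val_rev]
    omega

section Colorings

variable {t m : ℕ}

def HasNoRainbowLine {β : Type*} (g : (Fin m → Fin t) → β) : Prop :=
  ∀ ℓ, IsWeakLine ℓ → ¬ Injective (g ∘ ℓ)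

def IsBalanced (g : (Fin m → Fin t) → Fin t) : Prop :=
  ∀ c, #{x | g x = c} = t ^ (m - 1)

end Colorings

section Restriction

variable {α : Type*} [Fintype α] {m n : ℕ}

def restrictFirst (h : m ≤ n) (x : Fin n → α) : Fin m → α :=
  fun j => x (Fin.castLE h j)

lemma card_filter_restrictFirst (h : m ≤ n) (p : (Fin m → α) → Prop) [DecidablePred p] :
    #{x | p (restrictFirst h x)} = #{y | p y} * Fintype.card α ^ (n - m) := by
  obtain ⟨d, rfl⟩ := Nat.exists_eq_add_of_le h
  rw [Nat.add_sub_cancel_left]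
  have hcard : Fintype.card α ^ d = #(univ : Finset (Fin d → α)) := by simp
  rw [hcard, ← card_product, ← filter_product_left]
  refine (card_equiv (Fin.appendEquiv m d).symm fun x => ?_)
  simp only [mem_filter, mem_univ, true_and, mem_product, and_true, Fin.appendEquiv_symm_apply]
  rfl

end Restriction

lemma IsBalanced.comp_restrictFirst {t m n : ℕ} {g : (Fin m → Fin t) → Fin t} (hg : IsBalanced g)
    (hm : 1 ≤ m) (h : m ≤ n) : IsBalanced (g ∘ restrictFirst h) := by
  intro c
  rw [comp_def, card_filter_restrictFirst h (fun y => g y = c), hg c, Fintype.card_fin, ← pow_add]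
  congr 1
  omega

lemma HasNoRainbowLine.comp_restrictFirst {t m n : ℕ} {β : Type*} {g : (Fin m → Fin t) → β}
    (hg : HasNoRainbowLine g) (h : m ≤ n) : HasNoRainbowLine (g ∘ restrictFirst h) :=
  fun ℓ hℓ => hg (restrictFirst h ∘ ℓ) fun j => hℓ (Fin.castLE h j)

lemma not_injective_of_forall_ne {α : Type*} [Finite α] {f : α → α} (c : α) (h : ∀ i, f i ≠ c) :
    ¬ Injective f := fun hf =>
  let ⟨i, hi⟩ := Finite.injective_iff_surjective.1 hf c
  h i hi

lemma not_injective_comp_rev {t : ℕ} {β : Type*} {f : Fin t → β} (hf : ¬ Injective f) :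
    ¬ Injective (f ∘ Fin.rev) := by
  rwa [Injective.of_comp_iff' f Fin.rev_bijective]

section Square

variable {t : ℕ} {β : Type*}

lemma not_injective_of_mem_lineCoords (ht : 2 ≤ t) {G : Fin t → Fin t → β}
    (hrow : ∀ a, ¬ Injective (G a)) (hcol : ∀ b, ¬ Injective (G · b))
    (hdiag : ¬ Injective fun i => G i i) (hanti : ¬ Injective fun i => G i i.rev)
    {u v : Fin t → Fin t} (hu : u ∈ lineCoords t) (hv : v ∈ lineCoords t) :
    ¬ Injective fun i => G (u i) (v i) := by
  rcases mem_lineCoords.1 hu with rfl | rfl | ⟨a, rfl⟩ <;>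
    rcases mem_lineCoords.1 hv with rfl | rfl | ⟨b, rfl⟩
  · exact hdiag
  · exact hanti
  · exact hcol b
  · simpa [comp_def] using not_injective_comp_rev hanti
  · exact not_injective_comp_rev hdiag
  · exact not_injective_comp_rev (hcol b)
  · exact hrow a
  · exact not_injective_comp_rev (hrow a)
  · have : Nontrivial (Fin t) := Fin.nontrivial_iff_two_le.2 ht
    exact not_injective_const (α := Fin t) (b := G a b)

lemma hasNoRainbowLine_of_square (ht : 2 ≤ t) {G : Fin t → Fin t → β}
    (hrow : ∀ a, ¬ Injective (G a)) (hcol : ∀ b, ¬ Injective (G · b))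
    (hdiag : ¬ Injective fun i => G i i) (hanti : ¬ Injective fun i => G i i.rev) :
    HasNoRainbowLine fun y : Fin 2 → Fin t => G (y 0) (y 1) := fun _ hℓ =>
  not_injective_of_mem_lineCoords ht hrow hcol hdiag hanti (hℓ 0) (hℓ 1)

end Square

lemma card_filter_fin_two {α : Type*} [Fintype α] (p : α → α → Prop) [DecidableRel p] :
    #{y : Fin 2 → α | p (y 0) (y 1)} = ∑ a, #{b | p a b} := by
  rw [card_equiv (piFinTwoEquiv fun _ => α) (t := {z : α × α | p z.1 z.2}) (by simp)]
  simp only [card_filter, Fintype.sum_prod_type]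

lemma card_filter_eq_of_iff_Ico {t : ℕ} {p : Fin t → Prop} [DecidablePred p] (lo hi : ℕ)
    (hhi : hi ≤ t) (h : ∀ b : Fin t, p b ↔ lo ≤ b ∧ b < hi) : #{b | p b} = hi - lo := by
  rw [filter_congr fun b _ => h b, ← card_map Fin.valEmbedding, ← Nat.card_Ico lo hi]
  congr 1
  ext k
  simp only [mem_map, mem_filter, mem_univ, true_and, Fin.valEmbedding_apply, mem_Ico]
  exact ⟨fun ⟨b, hb, hbk⟩ => hbk ▸ hb, fun hk => ⟨⟨k, by omega⟩, hk, rfl⟩⟩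

def blockColor (k b : ℕ) : ℕ :=
  if b < k then 0 else if b < 2 * k then 1 else 2

lemma card_filter_blockColor {t k : ℕ} (hk : 2 * k ≤ t) (c : ℕ) :
    #{b : Fin t | blockColor k b = c} = if c ≤ 1 then k else if c = 2 then t - 2 * k else 0 := by
  have key (lo hi : ℕ) (hhi : hi ≤ t)
      (h : ∀ b : ℕ, b < t → (blockColor k b = c ↔ lo ≤ b ∧ b < hi)) :
      #{b : Fin t | blockColor k b = c} = hi - lo :=
    card_filter_eq_of_iff_Ico lo hi hhi fun b => h b b.2
  rcases (show c = 0 ∨ c = 1 ∨ c = 2 ∨ 3 ≤ c by omega) with rfl | rfl | rfl | hc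
  · rw [key 0 k (by omega) fun b hb => by unfold blockColor; grind]; simp
  · rw [key k (2 * k) hk fun b hb => by unfold blockColor; grind]; simp; omega
  · rw [key (2 * k) t le_rfl fun b hb => by unfold blockColor; grind]; simp
  · rw [key 0 0 (by omega) fun b hb => by unfold blockColor; grind]; split_ifs <;> omega

-- Rows 0 and 1 are equal, so no column is rainbow; the block lengths `t / 2` and `t % 2` make
-- each of the colors 0, 1, 2 occur exactly `t` times in rows 0–2, and row `a ≥ 3` has color `a`.
def squareColor (t a b : ℕ) : ℕ :=
  if a ≤ 1 then blockColor (t / 2) b else if a = 2 then blockColor (t % 2) b else a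

lemma card_filter_squareColor {t c : ℕ} (ht : 4 ≤ t) (hc : c < t) :
    #{y : Fin 2 → Fin t | squareColor t (y 0) (y 1) = c} = t := by
  rw [card_filter_fin_two fun a b : Fin t => squareColor t a b = c,
    Fin.sum_univ_eq_sum_range (fun a => #{b : Fin t | squareColor t a b = c}),
    ← sum_range_add_sum_Ico _ (show 3 ≤ t by omega)]
  have hhigh : ∀ a ∈ Ico 3 t, #{b : Fin t | squareColor t a b = c} = if c = a then t else 0 := by
    intro a ha
    rw [mem_Ico] at ha
    simp only [squareColor, show ¬ a ≤ 1 by omega, show a ≠ 2 by omega, if_false]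
    by_cases hca : c = a
    · simp [hca]
    · simp [hca, Ne.symm hca]
  rw [sum_congr rfl hhigh, sum_ite_eq, sum_range_succ, sum_range_succ, sum_range_one]
  have hdiv : 2 * (t / 2) ≤ t := Nat.mul_div_le t 2
  have hmod : 2 * (t % 2) ≤ t := by omega
  simp only [squareColor, zero_le, ↓reduceIte, card_filter_blockColor hdiv, le_refl,
    Nat.not_ofNat_le_one, card_filter_blockColor hmod, mem_Ico]
  split_ifs <;> omega

section SquareColoring

variable {t : ℕ}

def squareColoring (ht : 4 ≤ t) (a b : Fin t) : Fin t :=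
  ⟨squareColor t a b, by unfold squareColor blockColor; split_ifs <;> omega⟩

lemma isBalanced_squareColoring (ht : 4 ≤ t) :
    IsBalanced fun y : Fin 2 → Fin t => squareColoring ht (y 0) (y 1) := by
  intro c
  simpa only [squareColoring, Fin.ext_iff, Nat.add_one_sub_one, pow_one] using
    card_filter_squareColor ht c.2

lemma hasNoRainbowLine_squareColoring (ht : 4 ≤ t) :
    HasNoRainbowLine fun y : Fin 2 → Fin t => squareColoring ht (y 0) (y 1) := by
  refine hasNoRainbowLine_of_square (by omega) (fun a => ?_) (fun b => ?_) ?_ ?_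
  · by_cases ha : (a : ℕ) ≤ 2
    · refine not_injective_of_forall_ne ⟨3, by omega⟩ fun b => Fin.ne_of_val_ne ?_
      simp only [squareColoring, squareColor, blockColor]; split_ifs <;> omega
    · refine not_injective_of_forall_ne ⟨0, by omega⟩ fun b => Fin.ne_of_val_ne ?_
      simp only [squareColoring, squareColor]; split_ifs <;> omega
  · exact fun hinj => absurd (@hinj ⟨0, by omega⟩ ⟨1, by omega⟩ rfl) (by simp)
  · refine not_injective_of_forall_ne ⟨1, by omega⟩ fun i => Fin.ne_of_val_ne ?_
    simp only [squareColoring, squareColor, blockColor]; split_ifs <;> omega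
  · refine not_injective_of_forall_ne ⟨0, by omega⟩ fun i => Fin.ne_of_val_ne ?_
    simp only [squareColoring, squareColor, blockColor, Fin.val_rev]; split_ifs <;> omega

end SquareColoring

def cubeColor : Fin 3 → Fin 3 → Fin 3 → Fin 3 :=
  ![![![2, 0, 0], ![0, 0, 0], ![2, 2, 2]],
    ![![1, 2, 1], ![0, 1, 1], ![0, 2, 2]],
    ![![2, 2, 1], ![0, 1, 1], ![0, 1, 1]]]

def cubeColoring (y : Fin 3 → Fin 3) : Fin 3 :=
  cubeColor (y 0) (y 1) (y 2)

lemma isBalanced_cubeColoring : IsBalanced cubeColoring := by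
  unfold IsBalanced cubeColoring
  decide

lemma hasNoRainbowLine_cubeColoring : HasNoRainbowLine cubeColoring := by
  have key : ∀ u ∈ lineCoords 3, ∀ v ∈ lineCoords 3, ∀ w ∈ lineCoords 3,
      ¬ Injective fun i => cubeColor (u i) (v i) (w i) := by
    decide +kernel
  exact fun ℓ hℓ => key _ (hℓ 0) _ (hℓ 1) _ (hℓ 2)

/-- For every `t ≥ 3` and `n ≥ 2` with `(t,n) ≠ (3,2)`, there is a balanced
`t`-coloring of `C_t^n` (each color class of size `t^(n-1)`) with no rainbow
geometric line. -/
theorem stmt10 (t n : ℕ) (ht : 3 ≤ t) (hn : 2 ≤ n) (hex : ¬(t = 3 ∧ n = 2)) :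
    ∃ f : (Fin n → Fin t) → Fin t,
      (∀ c : Fin t,
        (Finset.univ.filter (fun x => f x = c)).card = t ^ (n - 1)) ∧
      (∀ ℓ : Fin t → Fin n → Fin t, IsGeomLine t n ℓ →
        ¬ Function.Injective (f ∘ ℓ)) := by
  suffices ∃ m, 1 ≤ m ∧ ∃ hmn : m ≤ n, ∃ g : (Fin m → Fin t) → Fin t,
      IsBalanced g ∧ HasNoRainbowLine g by
    obtain ⟨m, hm, hmn, g, hbal, hfree⟩ := this
    exact ⟨g ∘ restrictFirst hmn, hbal.comp_restrictFirst hm hmn,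
      fun ℓ hℓ => hfree.comp_restrictFirst hmn ℓ hℓ.isWeakLine⟩
  rcases (show t = 3 ∨ 4 ≤ t by omega) with rfl | ht4
  · exact ⟨3, by omega, by omega, cubeColoring, isBalanced_cubeColoring,
      hasNoRainbowLine_cubeColoring⟩
  · exact ⟨2, by omega, hn, _, isBalanced_squareColoring ht4, hasNoRainbowLine_squareColoring ht4⟩
end

section
/- For every even t ≥ 4 and every n ≥ 1, the balanced upper chromatic number of the hypergraph on vertex set C_t^n whose edges are the geometric lines satisfies χ̄_b(C_t^n) ≥ (t/2)^n. -/
/-- The balanced upper chromatic number of the hypergraph on vertex set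
`C_t^n` whose edges are the geometric lines: the largest `k` for which there
is a surjective `k`-coloring with all color classes of equal size and no
rainbow geometric line. -/
noncomputable def balancedUpperChromatic (t n : ℕ) : ℕ :=
  sSup {k : ℕ | ∃ f : (Fin n → Fin t) → Fin k,
    Function.Surjective f ∧
    (∀ c c' : Fin k,
      (Finset.univ.filter (fun x => f x = c)).card =
        (Finset.univ.filter (fun x => f x = c')).card) ∧
    (∀ ℓ : Fin t → Fin n → Fin t, IsGeomLine t n ℓ →
      ¬ Function.Injective (f ∘ ℓ))}

/-- For every even `t ≥ 4` and every `n ≥ 1`,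
`χ̄_b(C_t^n) ≥ (t/2)^n`. -/
theorem stmt14 (t n : ℕ) (ht : Even t) (ht4 : 4 ≤ t) (hn : 1 ≤ n) :
    (t / 2) ^ n ≤ balancedUpperChromatic t n := by
  obtain ⟨s, hs⟩ := ht
  set m := t / 2 with hmdef
  have hm2 : 2 * m = t := by omega
  let g : Fin t → Fin m := fun a => ⟨min a (t - 1 - a), by have := a.isLt; omega⟩
  let e : (Fin n → Fin m) ≃ Fin (m ^ n) := finFunctionFinEquiv
  let f : (Fin n → Fin t) → Fin (m ^ n) := fun x => e (fun j => g (x j))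
  have hfib : ∀ d : Fin m, (Finset.univ.filter (fun a => g a = d)).card = 2 := by
    intro d
    have hd := d.isLt
    have hset : Finset.univ.filter (fun a => g a = d) =
        {(⟨d, by omega⟩ : Fin t), ⟨t - 1 - d, by omega⟩} := by
      ext a
      have ha := a.isLt
      simp only [Finset.mem_filter, Finset.mem_univ, true_and, Finset.mem_insert,
        Finset.mem_singleton, Fin.ext_iff, g]
      omega
    rw [hset, Finset.card_insert_of_notMem, Finset.card_singleton]
    simp only [Finset.mem_singleton, Fin.ext_iff]
    omega
  have hfx : ∀ x, f x = e (fun j => g (x j)) := fun _ => rfl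
  have hclass : ∀ c : Fin (m ^ n),
      (Finset.univ.filter (fun x => f x = c)).card = 2 ^ n := by
    intro c
    rw [← Fintype.card_subtype]
    have e2 : {x : Fin n → Fin t // f x = c} ≃ ∀ j, {a : Fin t // g a = e.symm c j} := by
      refine (Equiv.subtypeEquivRight ?_).trans (Equiv.subtypePiEquivPi)
      intro x
      rw [hfx, Equiv.apply_eq_iff_eq_symm_apply, funext_iff]
    rw [Fintype.card_congr e2, Fintype.card_pi]
    simp only [Fintype.card_subtype, hfib]
    simp
  have hsurj : Function.Surjective f := by
    intro c
    refine ⟨fun j => ⟨e.symm c j, by have := (e.symm c j).isLt; omega⟩, ?_⟩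
    rw [hfx, Equiv.apply_eq_iff_eq_symm_apply]
    funext j
    have := (e.symm c j).isLt
    apply Fin.ext
    simp only [g]
    omega
  have hline : ∀ ℓ : Fin t → Fin n → Fin t, IsGeomLine t n ℓ →
      ¬ Function.Injective (f ∘ ℓ) := by
    intro ℓ ⟨hinj, hcol⟩ hcontra
    set i0 : Fin t := ⟨0, by omega⟩ with hi0
    set i1 : Fin t := ⟨t - 1, by omega⟩ with hi1
    have h01 : i0 ≠ i1 := by
      simp only [ne_eq, Fin.ext_iff, hi0, hi1]
      omega
    apply h01
    apply hcontra
    have key : ∀ j, g (ℓ i0 j) = g (ℓ i1 j) := by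
      intro j
      have hv0 := (ℓ i0 j).isLt
      have hv1 := (ℓ i1 j).isLt
      rcases hcol j with h | h | h
      · exact congrArg g (h _ _)
      · have h0 : (ℓ i0 j : ℕ) = 0 := h i0
        have h1 : (ℓ i1 j : ℕ) = t - 1 := h i1
        apply Fin.ext
        simp only [g, Fin.val_mk]
        omega
      · have h0 : (ℓ i0 j : ℕ) = t - 1 - 0 := h i0
        have h1 : (ℓ i1 j : ℕ) = t - 1 - (t - 1) := h i1
        apply Fin.ext
        simp only [g, Fin.val_mk]
        omega
    show f (ℓ i0) = f (ℓ i1)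
    rw [hfx, hfx]
    exact congrArg e (funext key)
  apply le_csSup
  · refine ⟨t ^ n, fun k hk => ?_⟩
    obtain ⟨f', hf', -, -⟩ := hk
    have := Fintype.card_le_of_surjective f' hf'
    simpa using this
  · exact ⟨f, hsurj, fun c c' => by rw [hclass, hclass], hline⟩
end

section
/- For every t ≥ 3 and n ≥ 3, there exists a balanced t-coloring of C_t^n with no rainbow combinatorial line. -/
/-!
Colour `x` by `twistedSum (x₀ - x₁) (x₁ - x₂)` in `ℤ/t`, where `twistedSum u v` is `u + v` off the
diagonal and `2u + 2` on it. Along a combinatorial line each of the coordinates `0, 1, 2` is either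
constant or equal to the moving index `i`. If coordinates `0` and `2` behave alike, then
`u + v = x₀ - x₂` is constant and the colour takes at most the two values `d` and `d + 2`, fewer
than `t`. Otherwise one of `u`, `v` is constant while the other runs through `ℤ/t`, and
`twistedSum u u = twistedSum u (u + 2)` repeats a colour. For balance, `twistedSum` extends to a
bijection of `(ℤ/t)²`, so every colour has `t` preimages `(u, v)`; each `(u, v)` has `t^(n-2)`
preimages `x`, because `x ↦ (x₀ - x₁, x₁ - x₂)` is a surjective group homomorphism.
-/

open Finset Function

lemma card_filter_comp_eq_mul {α β γ : Type*} [Fintype α] [Fintype β] [DecidableEq β]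
    [DecidableEq γ] {f : α → β} {g : β → γ} {M N : ℕ} (hf : ∀ b, #{a | f a = b} = M)
    (hg : ∀ c, #{b | g b = c} = N) (c : γ) : #{a | g (f a) = c} = N * M := by
  rw [card_eq_sum_card_fiberwise (f := f) (t := {b | g b = c}) (by intro a; simp)]
  calc ∑ b ∈ {b | g b = c}, #{a ∈ {a | g (f a) = c} | f a = b}
      = ∑ b ∈ {b | g b = c}, M := by
        refine sum_congr rfl fun b hb => ?_
        rw [filter_filter, ← hf b]
        congr 1
        ext a
        simp only [mem_filter, mem_univ, true_and, and_iff_right_iff_imp] at hb ⊢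
        rintro rfl
        exact hb
    _ = N * M := by rw [sum_const, hg, smul_eq_mul]

lemma AddMonoidHom.card_fiber_mul_card_eq {G M : Type*} [AddGroup G] [Fintype G] [AddMonoid M]
    [Fintype M] [DecidableEq M] (φ : G →+ M) (hφ : Surjective φ) (m : M) :
    #{g | φ g = m} * Fintype.card M = Fintype.card G := by
  calc #{g | φ g = m} * Fintype.card M = ∑ m' : M, #{g | φ g = m'} := by
        rw [sum_congr rfl fun m' _ => card_fiber_eq_of_mem_range φ (hφ m') (hφ m), sum_const,
          card_univ, smul_eq_mul, mul_comm]
    _ = Fintype.card G := by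
        rw [← card_univ, card_eq_sum_card_fiberwise (f := φ) (s := univ) (t := univ) (by simp)]

section ConsecutiveDiffs

variable {ι R : Type*} [AddCommGroup R]

def consecutiveDiffs (j₀ j₁ j₂ : ι) : (ι → R) →+ R × R where
  toFun x := (x j₀ - x j₁, x j₁ - x j₂)
  map_zero' := by simp
  map_add' x y := by ext <;> simp only [Pi.add_apply, Prod.fst_add, Prod.snd_add] <;> abel

lemma consecutiveDiffs_surjective [DecidableEq ι] {j₀ j₁ j₂ : ι} (h₀₁ : j₀ ≠ j₁)
    (h₀₂ : j₀ ≠ j₂) (h₁₂ : j₁ ≠ j₂) : Surjective (consecutiveDiffs (R := R) j₀ j₁ j₂) := by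
  rintro ⟨u, v⟩
  refine ⟨Pi.single j₀ u - Pi.single j₂ v, ?_⟩
  simp [consecutiveDiffs, h₀₁.symm, h₀₂.symm, h₁₂, h₀₂]

lemma card_filter_consecutiveDiffs_eq [Fintype ι] [DecidableEq ι] [Fintype R] [DecidableEq R]
    {j₀ j₁ j₂ : ι} (h₀₁ : j₀ ≠ j₁) (h₀₂ : j₀ ≠ j₂) (h₁₂ : j₁ ≠ j₂) (p : R × R) :
    #{x | consecutiveDiffs j₀ j₁ j₂ x = p} = Fintype.card R ^ (Fintype.card ι - 2) := by
  have hι : 2 ≤ Fintype.card ι := Fintype.one_lt_card_iff.2 ⟨j₀, j₁, h₀₁⟩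
  have key := (consecutiveDiffs j₀ j₁ j₂).card_fiber_mul_card_eq
    (consecutiveDiffs_surjective h₀₁ h₀₂ h₁₂) p
  rw [Fintype.card_prod, Fintype.card_fun, ← Nat.sub_add_cancel hι, pow_add, sq] at key
  exact Nat.eq_of_mul_eq_mul_right (by positivity) key

end ConsecutiveDiffs

section TwistedSum

variable {R : Type*} [CommRing R] [DecidableEq R]

-- Moving the diagonal by `2` keeps every value taken `|R|` times but makes both
-- `twistedSum u` and `(twistedSum · v)` non-injective.
def twistedSum (u v : R) : R := if u = v then 2 * u + 2 else u + v

lemma twistedSum_self (u : R) : twistedSum u u = 2 * u + 2 := if_pos rfl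

lemma twistedSum_of_ne {u v : R} (h : u ≠ v) : twistedSum u v = u + v := if_neg h

def twistedSumEquiv : R × R ≃ R × R where
  toFun p := (twistedSum p.1 p.2, if p.1 = p.2 then p.1 + 1 else p.1)
  invFun q := if 2 * q.2 = q.1 then (q.2 - 1, q.2 - 1) else (q.2, q.1 - q.2)
  left_inv := by
    rintro ⟨u, v⟩
    by_cases h : u = v
    · subst h
      simp only [twistedSum_self, if_true, show 2 * (u + 1) = 2 * u + 2 by ring,
        add_sub_cancel_right]
    · have h' : 2 * u ≠ u + v := fun h2 => h (by linear_combination h2)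
      simp only [twistedSum_of_ne h, h, if_false, h', add_sub_cancel_left]
  right_inv := by
    rintro ⟨c, w⟩
    by_cases h : 2 * w = c
    · simp only [h, if_true, twistedSum_self, sub_add_cancel, Prod.mk.injEq, and_true]
      rw [← h]; ring
    · have hw : w ≠ c - w := fun hw => h (by linear_combination hw)
      simp only [h, if_false, twistedSum_of_ne hw, hw, add_sub_cancel]

lemma card_filter_twistedSum_eq [Fintype R] (c : R) :
    #{p : R × R | twistedSum p.1 p.2 = c} = Fintype.card R := by
  rw [card_equiv twistedSumEquiv (t := {c} ×ˢ univ) (by simp [twistedSumEquiv, eq_comm]),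
    card_product]
  simp

lemma not_injective_twistedSum_left (h2 : (2 : R) ≠ 0) (u : R) : ¬ Injective (twistedSum u) := by
  intro hinj
  have hne : u ≠ u + 2 := fun h => h2 (by linear_combination -h)
  refine hne (hinj ?_)
  rw [twistedSum_self, twistedSum_of_ne hne]
  ring

lemma not_injective_twistedSum_right (h2 : (2 : R) ≠ 0) (v : R) :
    ¬ Injective (twistedSum · v) := by
  intro hinj
  have hne : v + 2 ≠ v := fun h => h2 (by linear_combination h)
  refine hne (hinj ?_)
  dsimp only
  rw [twistedSum_self, twistedSum_of_ne hne]
  ring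

lemma three_le_card_of_two_ne_zero [Fintype R] (h2 : (2 : R) ≠ 0) : 3 ≤ Fintype.card R := by
  have h01 : (0 : R) ≠ 1 := fun h => h2 (by rw [← one_add_one_eq_two, ← h, add_zero])
  have h12 : (1 : R) ≠ 2 := fun h => h01 (by linear_combination h)
  calc 3 = #({0, 1, 2} : Finset R) := by
        rw [card_insert_of_notMem (by simp [h01, h2.symm]), card_pair h12]
    _ ≤ Fintype.card R := card_le_univ _

lemma twistedSum_eq_or_eq_add_two {u v d : R} (h : u + v = d) :
    twistedSum u v = d ∨ twistedSum u v = d + 2 := by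
  by_cases huv : u = v
  · subst huv
    right
    rw [twistedSum_self, ← h]
    ring
  · exact .inl (by rw [twistedSum_of_ne huv, h])

lemma not_injective_twistedSum_of_add_eq {ι : Type*} [Fintype ι] (hι : 2 < Fintype.card ι)
    {u v : ι → R} {d : R} (h : ∀ i, u i + v i = d) :
    ¬ Injective fun i => twistedSum (u i) (v i) := by
  intro hinj
  have hmaps : Set.MapsTo (fun i => twistedSum (u i) (v i)) (univ : Finset ι)
      ({d, d + 2} : Finset R) :=
    fun i _ => by simpa using twistedSum_eq_or_eq_add_two (h i)
  have := card_le_card_of_injOn _ hmaps hinj.injOn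
  have := card_le_two (a := d) (b := d + 2)
  rw [card_univ] at *
  omega

end TwistedSum

def IsConstOrId {α : Type*} (p : α → α) : Prop := (∃ a, p = fun _ => a) ∨ p = id

theorem not_injective_twistedSum_sub {R : Type*} [CommRing R] [DecidableEq R] [Fintype R]
    (h2 : (2 : R) ≠ 0) {p₀ p₁ p₂ : R → R} (h₀ : IsConstOrId p₀) (h₁ : IsConstOrId p₁)
    (h₂ : IsConstOrId p₂) : ¬ Injective fun i => twistedSum (p₀ i - p₁ i) (p₁ i - p₂ i) := by
  have hR : 2 < Fintype.card R := three_le_card_of_two_ne_zero h2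
  rcases h₀ with ⟨a₀, rfl⟩ | rfl <;> rcases h₂ with ⟨a₂, rfl⟩ | rfl
  · exact not_injective_twistedSum_of_add_eq hR (d := a₀ - a₂) fun i => by ring
  · rcases h₁ with ⟨a₁, rfl⟩ | rfl
    · exact fun h => not_injective_twistedSum_left h2 (a₀ - a₁)
        (by simpa [comp_def] using h.comp (Equiv.subLeft a₁).injective)
    · exact fun h => not_injective_twistedSum_right h2 0
        (by simpa [comp_def] using h.comp (Equiv.subLeft a₀).injective)
  · rcases h₁ with ⟨a₁, rfl⟩ | rfl
    · exact fun h => not_injective_twistedSum_right h2 (a₁ - a₂)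
        (by simpa [comp_def] using h.comp (Equiv.addRight a₁).injective)
    · exact fun h => not_injective_twistedSum_left h2 0
        (by simpa [comp_def] using h.comp (Equiv.addRight a₂).injective)
  · exact not_injective_twistedSum_of_add_eq hR (d := 0) fun i => by simp

lemma IsCombLine.isConstOrId {t n : ℕ} [NeZero t] {ℓ : Fin t → Fin n → Fin t}
    (hℓ : IsCombLine t n ℓ) (j : Fin n) : IsConstOrId fun i => ℓ i j := by
  rcases hℓ.2.1 j with hconst | hid
  · exact .inl ⟨ℓ 0 j, funext fun i => hconst i 0⟩
  · exact .inr (funext fun i => Fin.ext (hid i))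

open Fin.CommRing in
/-- For every `t ≥ 3` and `n ≥ 3`, there exists a balanced `t`-coloring of
`C_t^n` (each color class of size `t^(n-1)`) with no rainbow combinatorial
line. -/
theorem stmt18 (t n : ℕ) (ht : 3 ≤ t) (hn : 3 ≤ n) :
    ∃ f : (Fin n → Fin t) → Fin t,
      (∀ c : Fin t,
        (Finset.univ.filter (fun x => f x = c)).card = t ^ (n - 1)) ∧
      (∀ ℓ : Fin t → Fin n → Fin t, IsCombLine t n ℓ →
        ¬ Function.Injective (f ∘ ℓ)) := by
  have : NeZero t := ⟨by omega⟩
  have h2 : (2 : Fin t) ≠ 0 := by simp [Fin.ext_iff, Nat.mod_eq_of_lt (show 2 < t by omega)]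
  let j₀ : Fin n := ⟨0, by omega⟩
  let j₁ : Fin n := ⟨1, by omega⟩
  let j₂ : Fin n := ⟨2, by omega⟩
  refine ⟨fun x => twistedSum (x j₀ - x j₁) (x j₁ - x j₂), fun c => ?_, fun ℓ hℓ => ?_⟩
  · have hfibers := card_filter_comp_eq_mul (g := fun p : Fin t × Fin t => twistedSum p.1 p.2)
      (card_filter_consecutiveDiffs_eq (j₀ := j₀) (j₁ := j₁) (j₂ := j₂)
        (by simp [Fin.ext_iff, j₀, j₁]) (by simp [Fin.ext_iff, j₀, j₂])
        (by simp [Fin.ext_iff, j₁, j₂])) card_filter_twistedSum_eq c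
    rwa [Fintype.card_fin, Fintype.card_fin, ← pow_succ', show n - 2 + 1 = n - 1 by omega]
      at hfibers
  · exact not_injective_twistedSum_sub h2 (hℓ.isConstOrId j₀) (hℓ.isConstOrId j₁)
      (hℓ.isConstOrId j₂)
end
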